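/- Let G be a ℤ-invariant valued abelian group such that for all g ∈ G and all m ∈ ℕ the set Δ_m(g) = {v(g − m·g') : g' ∈ G} admits a maximum, and let H/G be an extension of valued abelian groups (where H is not required to be ℤ-invariant). Then H/G is maximal if and only if H/G is pseudo-complete. -/

import Mathlib

universe u

/-- `v : G → Γ` is a valuation making the abelian group `G` a valued abelian group:
`Γ` is a linear order with greatest element `⊤` (denoted `∞` in the paper), `v` is
surjective, `v g = ⊤` iff `g = 0`, and `v (g - h) ≥ min (v g) (v h)`. -/
structure IsValuedGroup {G Γ : Type*} [AddCommGroup G] [LinearOrder Γ] [OrderTop Γ]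
    (v : G → Γ) : Prop where
  surjective : Function.Surjective v
  eq_top_iff : ∀ g : G, v g = ⊤ ↔ g = 0
  min_le_sub : ∀ g h : G, min (v g) (v h) ≤ v (g - h)

/-- A sequence `a` indexed by a linearly ordered set `I` is pseudo-Cauchy if eventually
`v (a i - a j) < v (a j - a k)` for `i < j < k`. -/
def IsPseudoCauchy {G Γ I : Type*} [AddCommGroup G] [LinearOrder Γ] [LinearOrder I]
    (v : G → Γ) (a : I → G) : Prop :=
  ∃ i₀ : I, ∀ i j k : I, i₀ ≤ i → i < j → j < k → v (a i - a j) < v (a j - a k)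

/-- `x` is a pseudo-limit of the sequence `a` if eventually
`v (a i - x) = v (a i - a j)` for `i < j`. -/
def IsPseudoLimit {G Γ I : Type*} [AddCommGroup G] [LinearOrder Γ] [LinearOrder I]
    (v : G → Γ) (a : I → G) (x : G) : Prop :=
  ∃ i₀ : I, ∀ i j : I, i₀ ≤ i → i < j → v (a i - x) = v (a i - a j)

/-- For subsets `G ⊆ K` of an ambient valued abelian group `(H, v)`, `K` is an immediate
extension of `G` (both regarded as valued groups via restriction of `v`): the nonzero
values of `K` and of `G` coincide, and for every value `γ` of `G` and every `k ∈ K` with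
`v k ≥ γ` there is `g ∈ G` with `v g ≥ γ` and `v (k - g) > γ` (i.e. the inclusion induces
isomorphisms of ribs). -/
def IsImmediateIn {H Γ : Type*} [AddCommGroup H] [LinearOrder Γ] [OrderTop Γ]
    (v : H → Γ) (G K : Set H) : Prop :=
  (∀ k ∈ K, k ≠ 0 → ∃ g ∈ G, g ≠ 0 ∧ v g = v k) ∧
  (∀ γ : Γ, (∃ g ∈ G, g ≠ 0 ∧ v g = γ) →
    ∀ k ∈ K, γ ≤ v k → ∃ g ∈ G, γ ≤ v g ∧ γ < v (k - g))

/-- Relative pseudo-completeness: every pseudo-Cauchy sequence with entries in `G` which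
has a pseudo-limit in `K` already has a pseudo-limit in `G` (all inside the ambient valued
abelian group `(H, v)`). -/
def IsPseudoCompleteIn {H Γ : Type u} [AddCommGroup H] [LinearOrder Γ]
    (v : H → Γ) (G K : Set H) : Prop :=
  ∀ (I : Type u) [LinearOrder I] [WellFoundedLT I] [NoMaxOrder I] [Nonempty I]
    (a : I → H), (∀ i, a i ∈ G) → IsPseudoCauchy v a →
    (∃ x ∈ K, IsPseudoLimit v a x) → ∃ x ∈ G, IsPseudoLimit v a x

/-- A valued abelian group is pseudo-complete if every pseudo-Cauchy sequence in it
admits a pseudo-limit in it. -/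
def IsPseudoComplete {G Γ : Type u} [AddCommGroup G] [LinearOrder Γ] (v : G → Γ) : Prop :=
  ∀ (I : Type u) [LinearOrder I] [WellFoundedLT I] [NoMaxOrder I] [Nonempty I]
    (a : I → G), IsPseudoCauchy v a → ∃ x : G, IsPseudoLimit v a x

/-- The extension `H/G` is maximal: there is no subgroup `K` with `G ⊊ K ⊆ H` such that
`K/G` is immediate. -/
def IsMaximalIn {H Γ : Type u} [AddCommGroup H] [LinearOrder Γ] [OrderTop Γ]
    (v : H → Γ) (G : AddSubgroup H) : Prop :=
  ∀ K : AddSubgroup H, G < K → ¬ IsImmediateIn v (G : Set H) (K : Set H)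

/-- A valued abelian group `(G, v)` is maximal if it admits no proper immediate extension:
whenever `(H, w)` is a valued abelian group (with the same value set, as immediate extensions
preserve the skeleton) and `f : G →+ H` is an injective valuation-preserving homomorphism
making `H` an immediate extension of the image of `G`, then `f` is surjective. -/
def IsMaximal {G Γ : Type u} [AddCommGroup G] [LinearOrder Γ] [OrderTop Γ]
    (v : G → Γ) : Prop :=
  ∀ (H : Type u) (_ : AddCommGroup H) (w : H → Γ), IsValuedGroup w →
    ∀ f : G →+ H, Function.Injective f → (∀ g : G, w (f g) = v g) →
      IsImmediateIn w (Set.range f) Set.univ → Function.Surjective f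

/-!
If `x ∈ H ∖ G` has no best approximation in `G`, i.e. the values `v (g - x)` for `g ∈ G` have no
maximum, then a well-ordered cofinal choice of these values gives a pseudo-Cauchy sequence in `G`
with pseudo-limit `x` and no pseudo-limit in `G`. Conversely, a pseudo-limit in `H` of a
pseudo-Cauchy sequence in `G` with no pseudo-limit in `G` has no best approximation in `G`, and
then `G + ℤx` is an immediate extension of `G`: every `g - n • x` is approximated by an element
of `G` to better than its own value. To see this, take `g₀` with `v (g - n • g₀) = max Δ_n(g)`.
If some `y ∈ G` approximates `x` better than this maximum, `g - n • y` does the job; otherwise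
any `y ∈ G` with `v (y - x) > v (g₀ - x)` does, via `n • (g₀ - y)`, whose value is
`v (g₀ - x)` by `ℤ`-invariance.
-/

theorem IsPseudoCauchy.exists_map_sub_lt_map_sub {H Γ I : Type*} [AddCommGroup H]
    [LinearOrder Γ] [LinearOrder I] [NoMaxOrder I] {v : H → Γ} {a : I → H} {x : H}
    (ha : IsPseudoCauchy v a) (hx : IsPseudoLimit v a x) :
    ∃ i₀, ∀ i j, i₀ ≤ i → i < j → v (a i - x) < v (a j - x) := by
  obtain ⟨i₁, h₁⟩ := ha
  obtain ⟨i₂, h₂⟩ := hx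
  refine ⟨max i₁ i₂, fun i j hi hij => ?_⟩
  obtain ⟨k, hjk⟩ := exists_gt j
  rw [h₂ i j (le_of_max_le_right hi) hij, h₂ j k (le_of_max_le_right (hi.trans hij.le)) hjk]
  exact h₁ i j k (le_of_max_le_left hi) hij hjk

variable {H Γ : Type*} [AddCommGroup H] [LinearOrder Γ] [OrderTop Γ] {v : H → Γ}

namespace IsValuedGroup

theorem map_zero (hv : IsValuedGroup v) : v 0 = ⊤ := (hv.eq_top_iff 0).2 rfl

theorem map_neg (hv : IsValuedGroup v) (g : H) : v (-g) = v g := by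
  have key : ∀ x : H, v x ≤ v (-x) := fun x => by
    simpa [hv.map_zero] using hv.min_le_sub 0 x
  exact le_antisymm (by simpa using key (-g)) (key g)

theorem map_sub_comm (hv : IsValuedGroup v) (g h : H) : v (g - h) = v (h - g) := by
  rw [← neg_sub, hv.map_neg]

theorem min_le_add (hv : IsValuedGroup v) (g h : H) : min (v g) (v h) ≤ v (g + h) := by
  simpa [hv.map_neg] using hv.min_le_sub g (-h)

theorem map_add_of_lt (hv : IsValuedGroup v) {g h : H} (hlt : v g < v h) :
    v (g + h) = v g := by
  refine le_antisymm ?_ ((le_min le_rfl hlt.le).trans (hv.min_le_add g h))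
  by_contra! hgt
  have := hv.min_le_sub (g + h) h
  rw [add_sub_cancel_right] at this
  exact this.not_gt (lt_min hgt hlt)

theorem map_sub_of_lt (hv : IsValuedGroup v) {g h : H} (hlt : v g < v h) :
    v (g - h) = v g := by
  rw [sub_eq_add_neg]
  exact hv.map_add_of_lt (by rwa [hv.map_neg])

theorem map_eq_of_lt_map_sub (hv : IsValuedGroup v) {g k : H} (hlt : v g < v (k - g)) :
    v k = v g := by
  simpa using hv.map_add_of_lt hlt

theorem le_map_nsmul (hv : IsValuedGroup v) (g : H) (n : ℕ) : v g ≤ v (n • g) := by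
  induction n with
  | zero => simp [hv.map_zero]
  | succ n ih =>
    rw [succ_nsmul]
    exact (le_min ih le_rfl).trans (hv.min_le_add _ g)

end IsValuedGroup

theorem isImmediateIn_iff (hv : IsValuedGroup v) {G : AddSubgroup H} {K : Set H} :
    IsImmediateIn v G K ↔ ∀ k ∈ K, k ≠ 0 → ∃ g ∈ G, v k < v (k - g) := by
  constructor
  · intro himm k hk hk0
    obtain ⟨g₁, hg₁, hg₁0, hg₁k⟩ := himm.1 k hk hk0
    obtain ⟨g, hg, -, hlt⟩ := himm.2 _ ⟨g₁, hg₁, hg₁0, hg₁k⟩ k hk le_rfl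
    exact ⟨g, hg, hlt⟩
  intro happrox
  have hval : ∀ k ∈ K, k ≠ 0 → ∃ g ∈ G, v g = v k ∧ v k < v (k - g) := by
    intro k hk hk0
    obtain ⟨g, hg, hlt⟩ := happrox k hk hk0
    refine ⟨g, hg, ?_, hlt⟩
    simpa using hv.map_sub_of_lt hlt
  refine ⟨fun k hk hk0 => ?_, ?_⟩
  · obtain ⟨g, hg, hgk, hlt⟩ := hval k hk hk0
    exact ⟨g, hg, by rintro rfl; simp at hlt, hgk⟩
  rintro γ ⟨g₀, -, hg₀0, rfl⟩ k hk hle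
  rcases hle.lt_or_eq with hlt | heq
  · exact ⟨0, G.zero_mem, by simp [hv.map_zero], by simpa using hlt⟩
  have hk0 : k ≠ 0 := by
    rintro rfl
    exact hg₀0 ((hv.eq_top_iff g₀).1 (heq.trans hv.map_zero))
  obtain ⟨g, hg, hgk, hlt⟩ := hval k hk hk0
  exact ⟨g, hg, heq ▸ hgk.ge, heq ▸ hlt⟩

section PseudoCauchy

variable {I : Type*} [LinearOrder I] {a : I → H} {x y : H}

theorem IsPseudoLimit.of_map_sub_lt (hv : IsValuedGroup v) (hx : IsPseudoLimit v a x)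
    (h : ∃ i₀, ∀ i, i₀ ≤ i → v (a i - x) < v (y - x)) : IsPseudoLimit v a y := by
  obtain ⟨i₁, h₁⟩ := hx
  obtain ⟨i₂, h₂⟩ := h
  refine ⟨max i₁ i₂, fun i j hi hij => ?_⟩
  rw [← h₁ i j (le_of_max_le_left hi) hij, ← sub_sub_sub_cancel_right (a i) y x,
    hv.map_sub_of_lt (h₂ i (le_of_max_le_right hi))]

theorem IsPseudoLimit.exists_map_sub_le [NoMaxOrder I] (hv : IsValuedGroup v)
    (hx : IsPseudoLimit v a x) (hy : IsPseudoLimit v a y) :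
    ∃ i₀, ∀ i, i₀ ≤ i → v (a i - x) ≤ v (y - x) := by
  obtain ⟨i₁, h₁⟩ := hx
  obtain ⟨i₂, h₂⟩ := hy
  refine ⟨max i₁ i₂, fun i hi => ?_⟩
  obtain ⟨j, hij⟩ := exists_gt i
  calc v (a i - x) = min (v (a i - x)) (v (a i - y)) := by
        rw [h₁ i j (le_of_max_le_left hi) hij, h₂ i j (le_of_max_le_right hi) hij, min_self]
    _ ≤ v (a i - x - (a i - y)) := hv.min_le_sub _ _
    _ = v (y - x) := by rw [sub_sub_sub_cancel_left]

theorem map_sub_eq_of_strictMono (hv : IsValuedGroup v) (h : StrictMono fun i => v (a i - x))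
    {i j : I} (hij : i < j) : v (a i - a j) = v (a i - x) := by
  rw [← sub_sub_sub_cancel_right (a i) (a j) x, hv.map_sub_of_lt (h hij)]

theorem isPseudoCauchy_of_strictMono [Nonempty I] (hv : IsValuedGroup v)
    (h : StrictMono fun i => v (a i - x)) : IsPseudoCauchy v a :=
  ⟨Classical.arbitrary I, fun _ _ _ _ hij hjk => by
    rw [map_sub_eq_of_strictMono hv h hij, map_sub_eq_of_strictMono hv h hjk]
    exact h hij⟩

theorem isPseudoLimit_of_strictMono [Nonempty I] (hv : IsValuedGroup v)
    (h : StrictMono fun i => v (a i - x)) : IsPseudoLimit v a x :=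
  ⟨Classical.arbitrary I, fun _ _ _ hij => (map_sub_eq_of_strictMono hv h hij).symm⟩

theorem not_isPseudoLimit_of_strictMono [NoMaxOrder I] [Nonempty I] (hv : IsValuedGroup v)
    (h : StrictMono fun i => v (a i - x)) (hy : ∃ i, v (y - x) < v (a i - x)) :
    ¬ IsPseudoLimit v a y := by
  intro hlim
  obtain ⟨i₀, hle⟩ := (isPseudoLimit_of_strictMono hv h).exists_map_sub_le hv hlim
  obtain ⟨i, hi⟩ := hy
  exact (hi.trans_le (h.monotone (le_max_left i i₀))).not_ge (hle _ (le_max_right i i₀))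

end PseudoCauchy

theorem exists_isCofinal_wellFoundedLT (α : Type*) [LinearOrder α] :
    ∃ s : Set α, IsCofinal s ∧ WellFoundedLT s := by
  refine ⟨_, isCofinal_setOfPred_imp_lt WellOrderingRel, ⟨?_⟩⟩
  refine Subrelation.wf (fun {p q} hpq => ?_)
    (InvImage.wf Subtype.val (IsWellFounded.wf (r := WellOrderingRel)))
  rcases trichotomous_of WellOrderingRel p.1 q.1 with h | h | h
  · exact h
  · exact absurd (Subtype.ext h) hpq.ne
  · exact absurd (p.2 q.1 h) (not_lt.2 hpq.le)

def HasNoBestApprox (v : H → Γ) (G : AddSubgroup H) (x : H) : Prop :=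
  ∀ g ∈ G, ∃ g' ∈ G, v (g - x) < v (g' - x)

namespace HasNoBestApprox

variable {G : AddSubgroup H} {x : H}

theorem notMem (hv : IsValuedGroup v) (hx : HasNoBestApprox v G x) : x ∉ G := by
  intro hxG
  obtain ⟨g', -, hlt⟩ := hx x hxG
  rw [sub_self, hv.map_zero] at hlt
  exact not_top_lt hlt

theorem exists_lt_map_sub_nsmul (hv : IsValuedGroup v)
    (hinv : ∀ g ∈ G, ∀ n : ℕ, 0 < n → v (n • g) = v g)
    (hdelta : ∀ g ∈ G, ∀ m : ℕ,
      ∃ δ : Γ, IsGreatest {δ' : Γ | ∃ g' ∈ G, v (g - m • g') = δ'} δ)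
    (hx : HasNoBestApprox v G x) {g : H} (hg : g ∈ G) {n : ℕ} (hn : 0 < n) :
    ∃ g' ∈ G, v (g - n • x) < v (g - n • x - g') := by
  suffices ∃ g' ∈ G, v g' < v (g - n • x - g') by
    obtain ⟨g', hg', hlt⟩ := this
    exact ⟨g', hg', by rwa [hv.map_eq_of_lt_map_sub hlt]⟩
  obtain ⟨-, ⟨g₀, hg₀, rfl⟩, hδ⟩ := hdelta g hg n
  have hmax : ∀ y ∈ G, v (g - n • y) ≤ v (g - n • g₀) := fun y hy => hδ ⟨y, hy, rfl⟩
  by_cases hfar : ∃ y ∈ G, v (g - n • g₀) < v (y - x)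
  · obtain ⟨y, hy, hlt⟩ := hfar
    refine ⟨g - n • y, G.sub_mem hg (G.nsmul_mem hy n), ?_⟩
    calc v (g - n • y) ≤ v (g - n • g₀) := hmax y hy
      _ < v (y - x) := hlt
      _ ≤ v (n • (y - x)) := hv.le_map_nsmul _ n
      _ = v (g - n • x - (g - n • y)) := by rw [smul_sub]; congr 1; abel
  push Not at hfar
  obtain ⟨y, hy, hlt⟩ := hx g₀ hg₀
  refine ⟨n • (g₀ - y), G.nsmul_mem (G.sub_mem hg₀ hy) n, ?_⟩
  calc v (n • (g₀ - y)) = v (g₀ - x) := by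
        rw [hinv _ (G.sub_mem hg₀ hy) n hn, ← sub_sub_sub_cancel_right g₀ y x,
          hv.map_sub_of_lt hlt]
    _ < v (y - x) := hlt
    _ ≤ min (v (g - n • g₀)) (v (n • (y - x))) := le_min (hfar y hy) (hv.le_map_nsmul _ n)
    _ ≤ v (g - n • g₀ + n • (y - x)) := hv.min_le_add _ _
    _ = v (g - n • x - n • (g₀ - y)) := by congr 1; rw [smul_sub, smul_sub]; abel

theorem isImmediateIn_sup_zmultiples (hv : IsValuedGroup v)
    (hinv : ∀ g ∈ G, ∀ n : ℕ, 0 < n → v (n • g) = v g)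
    (hdelta : ∀ g ∈ G, ∀ m : ℕ,
      ∃ δ : Γ, IsGreatest {δ' : Γ | ∃ g' ∈ G, v (g - m • g') = δ'} δ)
    (hx : HasNoBestApprox v G x) :
    IsImmediateIn v G (G ⊔ AddSubgroup.zmultiples x : AddSubgroup H) := by
  rw [isImmediateIn_iff hv]
  intro k hk hk0
  by_cases hkG : k ∈ G
  · refine ⟨k, hkG, ?_⟩
    rw [sub_self, hv.map_zero, lt_top_iff_ne_top]
    exact mt (hv.eq_top_iff k).1 hk0
  obtain ⟨g, hg, -, ⟨z, rfl⟩, rfl⟩ := AddSubgroup.mem_sup.1 hk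
  obtain ⟨n, rfl | rfl⟩ := Int.eq_nat_or_neg z
  all_goals
    have hn : 0 < n := Nat.pos_of_ne_zero (by rintro rfl; simp [hg] at hkG)
  · obtain ⟨g', hg', hlt⟩ := hx.exists_lt_map_sub_nsmul hv hinv hdelta (G.neg_mem hg) hn
    refine ⟨-g', G.neg_mem hg', ?_⟩
    have hk' : g + (n : ℤ) • x = -(-g - n • x) := by rw [natCast_zsmul]; abel
    have hk'' : -(-g - n • x) - -g' = -(-g - n • x - g') := by abel
    rwa [hk', hk'', hv.map_neg, hv.map_neg]
  · simpa [sub_eq_add_neg] using hx.exists_lt_map_sub_nsmul hv hinv hdelta hg hn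

end HasNoBestApprox

theorem IsPseudoLimit.hasNoBestApprox {I : Type*} [LinearOrder I] [NoMaxOrder I] {a : I → H}
    {x : H} {G : AddSubgroup H} (hv : IsValuedGroup v) (haG : ∀ i, a i ∈ G)
    (ha : IsPseudoCauchy v a) (hx : IsPseudoLimit v a x) (hG : ∀ y ∈ G, ¬ IsPseudoLimit v a y) :
    HasNoBestApprox v G x := by
  intro g hg
  by_contra! hbest
  obtain ⟨i₀, hmono⟩ := ha.exists_map_sub_lt_map_sub hx
  refine hG g hg (hx.of_map_sub_lt hv ⟨i₀, fun i hi => ?_⟩)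
  obtain ⟨j, hij⟩ := exists_gt i
  exact (hmono i j hi hij).trans_le (hbest (a j) (haG j))

theorem IsImmediateIn.hasNoBestApprox (hv : IsValuedGroup v) {G K : AddSubgroup H} {k : H}
    (himm : IsImmediateIn v G K) (hGK : G ≤ K) (hk : k ∈ K) (hkG : k ∉ G) :
    HasNoBestApprox v G k := by
  intro g hg
  obtain ⟨g₁, hg₁, hlt⟩ := (isImmediateIn_iff hv).1 himm (k - g) (K.sub_mem hk (hGK hg))
    (sub_ne_zero.2 fun h => hkG (h ▸ hg))
  refine ⟨g + g₁, G.add_mem hg hg₁, ?_⟩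
  rwa [hv.map_sub_comm, hv.map_sub_comm (g + g₁), sub_add_eq_sub_sub]

theorem HasNoBestApprox.not_isPseudoCompleteIn {H Γ : Type u} [AddCommGroup H] [LinearOrder Γ]
    [OrderTop Γ] {v : H → Γ} (hv : IsValuedGroup v) {G : AddSubgroup H} {K : Set H} {x : H}
    (hx : HasNoBestApprox v G x) (hxK : x ∈ K) : ¬ IsPseudoCompleteIn v (G : Set H) K := by
  intro hpc
  let S : Set Γ := {γ | ∃ g ∈ G, v (g - x) = γ}
  have : NoMaxOrder S := ⟨fun ⟨_, g, hg, hgx⟩ => by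
    obtain ⟨g', hg', hlt⟩ := hx g hg
    exact ⟨⟨_, g', hg', rfl⟩, hgx ▸ hlt⟩⟩
  have : Nonempty S := ⟨⟨_, 0, G.zero_mem, rfl⟩⟩
  obtain ⟨T, hTcof, _⟩ := exists_isCofinal_wellFoundedLT S
  have : NoMaxOrder T := ⟨fun t => by
    obtain ⟨s, hs⟩ := exists_gt t.1
    obtain ⟨t', ht', hst'⟩ := hTcof s
    exact ⟨⟨t', ht'⟩, hs.trans_le hst'⟩⟩
  have : Nonempty T := hTcof.nonempty.to_subtype
  choose a haG hav using fun t : T => t.1.2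
  have hmono : StrictMono fun t => v (a t - x) := fun t t' h => by simp only [hav]; exact h
  obtain ⟨y, hyG, hy⟩ := hpc T a haG (isPseudoCauchy_of_strictMono hv hmono)
    ⟨x, hxK, isPseudoLimit_of_strictMono hv hmono⟩
  obtain ⟨g', hg', hlt⟩ := hx y hyG
  obtain ⟨t, ht, hle⟩ := hTcof ⟨_, g', hg', rfl⟩
  exact not_isPseudoLimit_of_strictMono hv hmono ⟨⟨t, ht⟩, by rw [hav]; exact hlt.trans_le hle⟩ hy

/-- Let `G` be a ℤ-invariant valued abelian group (a subgroup of the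
ambient valued abelian group `(H, v)`, with the restricted valuation) such that for all
`g ∈ G` and all `m ∈ ℕ` the set `Δ_m(g) = {v (g - m • g') : g' ∈ G}` admits a maximum, and
let `H/G` be an extension of valued abelian groups (where `H` is not required to be
ℤ-invariant). Then `H/G` is maximal if and only if `H/G` is pseudo-complete. -/
theorem maximalIn_iff_pseudoCompleteIn {H Γ : Type u} [AddCommGroup H] [LinearOrder Γ]
    [OrderTop Γ] (v : H → Γ) (hv : IsValuedGroup v) (G : AddSubgroup H)
    (hinv : ∀ g ∈ G, ∀ n : ℕ, 0 < n → v (n • g) = v g)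
    (hdelta : ∀ g ∈ G, ∀ m : ℕ,
      ∃ δ : Γ, IsGreatest {δ' : Γ | ∃ g' ∈ G, v (g - m • g') = δ'} δ) :
    IsMaximalIn v G ↔ IsPseudoCompleteIn v (G : Set H) Set.univ := by
  constructor
  · rintro hmax I _ _ _ _ a haG ha ⟨x, -, hx⟩
    by_contra! hG
    have hbest := hx.hasNoBestApprox hv haG ha hG
    refine hmax _ (left_lt_sup.2 ?_) (hbest.isImmediateIn_sup_zmultiples hv hinv hdelta)
    exact AddSubgroup.zmultiples_le.not.2 (hbest.notMem hv)
  · intro hpc K hGK himm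
    obtain ⟨k, hkK, hkG⟩ := SetLike.exists_of_lt hGK
    exact (himm.hasNoBestApprox hv hGK.le hkK hkG).not_isPseudoCompleteIn hv (Set.mem_univ k) hpc
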